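/- Let 0 < ρ < 1 and A = ρ·J_n(1) (Jordan block with eigenvalue 1 scaled by ρ, i.e. ρ on diagonal and superdiagonal) and H = ρ·e_n. Then the distance to uncontrollability satisfies 2ρ/(n+1) ≤ d(A,H) ≤ πρ/(n+1) for all n ≥ 1. -/

import Mathlib

open Matrix Real

/-- Least singular value of a matrix `B` with `n` rows:
`σ_min(B) = inf { ‖Bᴴ v‖ : ‖v‖ = 1 }`. -/
noncomputable def sigmaMin {n : ℕ} {m : Type*} [Fintype m] (B : Matrix (Fin n) m ℂ) : ℝ :=
  sInf {x : ℝ | ∃ v : EuclideanSpace ℂ (Fin n), ‖v‖ = 1 ∧ x = ‖Matrix.toEuclideanLin Bᴴ v‖}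

/-- Eising's distance to uncontrollability:
`d(A,H) = inf_{s ∈ ℂ} σ_min [A - sI, H]`. -/
noncomputable def distUnc {n r : ℕ} (A : Matrix (Fin n) (Fin n) ℂ)
    (H : Matrix (Fin n) (Fin r) ℂ) : ℝ :=
  ⨅ s : ℂ, sigmaMin (Matrix.fromCols (A - s • (1 : Matrix (Fin n) (Fin n) ℂ)) H)

/-- The matrix `ρ·J_n(1)`: `ρ` on the diagonal and superdiagonal, zeros elsewhere. -/
def rhoJordan (n : ℕ) (ρ : ℝ) : Matrix (Fin n) (Fin n) ℂ :=
  Matrix.of fun i j =>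
    if (i : ℕ) = (j : ℕ) ∨ (j : ℕ) = (i : ℕ) + 1 then (ρ : ℂ) else 0

/-!
Pad `v ∈ ℂⁿ` to a sequence `z` with `z 0 = z (n + 1) = 0` and `z (i + 1) = vᵢ`. Then
`[A - sI, H]ᴴ v` is the sequence `c z (m + 1) + ρ z m`, `0 ≤ m ≤ n`, with `c = conj (ρ - s)`.
The quadratic form of the path graph on `n` vertices is at most `cos α`, `α = π / (n + 1)`, because
`m ↦ sin (m α)` is a positive eigenvector; expanding the square then gives
`‖[A - sI, H]ᴴ v‖² ≥ (|c|² + ρ² - 2 |c| ρ cos α) ‖v‖² ≥ ρ² sin² α ‖v‖²`, with equality for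
`c = -ρ cos α` and `z m = sin (m α)`. So `d(A, H) = ρ sin α`, and `2x/π ≤ sin x ≤ x` finishes.
-/

open Finset

section SigmaMin

variable {n : ℕ} {ι : Type*} [Fintype ι] (B : Matrix (Fin n) ι ℂ)

lemma sigmaMin_nonneg : 0 ≤ sigmaMin B :=
  Real.sInf_nonneg fun _ ⟨_, _, hx⟩ => hx ▸ norm_nonneg _

lemma sigmaMin_mul_norm_le (v : EuclideanSpace ℂ (Fin n)) :
    sigmaMin B * ‖v‖ ≤ ‖toEuclideanLin Bᴴ v‖ := by
  rcases eq_or_ne v 0 with rfl | hv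
  · simp
  have hv' : 0 < ‖v‖ := norm_pos_iff.2 hv
  have hunit : ‖((‖v‖⁻¹ : ℝ) : ℂ) • v‖ = 1 := by
    rw [norm_smul, Complex.norm_real, norm_inv, norm_norm, inv_mul_cancel₀ hv'.ne']
  have hle : sigmaMin B ≤ ‖toEuclideanLin Bᴴ (((‖v‖⁻¹ : ℝ) : ℂ) • v)‖ :=
    csInf_le ⟨0, fun _ ⟨_, _, hx⟩ => hx ▸ norm_nonneg _⟩ ⟨_, hunit, rfl⟩
  rw [map_smul, norm_smul, Complex.norm_real, norm_inv, norm_norm] at hle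
  rwa [← le_div_iff₀ hv', div_eq_inv_mul]

lemma le_sigmaMin (hn : 0 < n) {c : ℝ} (h : ∀ v, c * ‖v‖ ≤ ‖toEuclideanLin Bᴴ v‖) :
    c ≤ sigmaMin B := by
  refine le_csInf ⟨_, EuclideanSpace.single ⟨0, hn⟩ 1, by simp, rfl⟩ ?_
  rintro _ ⟨v, hv, rfl⟩
  simpa [hv] using h v

end SigmaMin

lemma distUnc_le_sigmaMin {n r : ℕ} (A : Matrix (Fin n) (Fin n) ℂ) (H : Matrix (Fin n) (Fin r) ℂ)
    (s : ℂ) : distUnc A H ≤ sigmaMin (fromCols (A - s • 1) H) :=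
  ciInf_le ⟨0, by rintro _ ⟨s, rfl⟩; exact sigmaMin_nonneg _⟩ s

lemma sum_range_succ_eq_of_eq {M : Type*} [AddCommGroup M] (f : ℕ → M) {N : ℕ} (h : f N = f 0) :
    ∑ m ∈ range N, f (m + 1) = ∑ m ∈ range N, f m := by
  have := (sum_range_succ' f N).symm.trans (sum_range_succ f N)
  rwa [h, add_left_inj] at this

lemma two_mul_mul_le_div_mul_sq_add_div_mul_sq {p q : ℝ} (hp : 0 < p) (hq : 0 < q) (x y : ℝ) :
    2 * (x * y) ≤ q / p * x ^ 2 + p / q * y ^ 2 := by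
  rw [div_mul_eq_mul_div, div_mul_eq_mul_div, div_add_div _ _ hp.ne' hq.ne',
    le_div_iff₀ (by positivity)]
  nlinarith [sq_nonneg (q * x - p * y)]

/-- Weighted AM-GM `2ab ≤ (sₘ₊₁/sₘ) a² + (sₘ/sₘ₊₁) b²` on each edge of the path; the inequality
on `s` collects the weights at each vertex into at most `2c`. -/
theorem sum_range_mul_succ_le_of_supersolution {N : ℕ} {c : ℝ} (s a : ℕ → ℝ)
    (hs : ∀ m ≤ N, 0 ≤ s m) (hpos : ∀ m, 0 < m → m < N → 0 < s m)
    (hrec : ∀ m, m + 1 < N → s m + s (m + 2) ≤ 2 * c * s (m + 1))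
    (ha0 : a 0 = 0) (haN : a N = 0) :
    ∑ m ∈ range N, a m * a (m + 1) ≤ c * ∑ m ∈ range N, a m ^ 2 := by
  have hedge : ∀ m ∈ range N, 2 * (a m * a (m + 1)) ≤
      s (m + 1) / s m * a m ^ 2 + s m / s (m + 1) * a (m + 1) ^ 2 := by
    intro m hm
    rw [mem_range] at hm
    by_cases hinner : 0 < m ∧ m + 1 < N
    · exact two_mul_mul_le_div_mul_sq_add_div_mul_sq (hpos m hinner.1 hm)
        (hpos _ m.succ_pos hinner.2) _ _
    have hzero : a m * a (m + 1) = 0 := by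
      rcases Nat.eq_zero_or_pos m with rfl | _
      · rw [ha0, zero_mul]
      · rw [show m + 1 = N by omega, haN, mul_zero]
    have := hs m hm.le
    have := hs (m + 1) hm
    rw [hzero, mul_zero]
    positivity
  have hshift : ∑ m ∈ range N, s m / s (m + 1) * a (m + 1) ^ 2 =
      ∑ m ∈ range N, s (m - 1) / s m * a m ^ 2 :=
    sum_range_succ_eq_of_eq (fun m => s (m - 1) / s m * a m ^ 2) (by simp [ha0, haN])
  have hvertex : ∀ m ∈ range N, s (m + 1) / s m * a m ^ 2 + s (m - 1) / s m * a m ^ 2 ≤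
      2 * c * a m ^ 2 := by
    intro m hm
    rw [mem_range] at hm
    rcases m with _ | k
    · simp [ha0]
    rw [← add_mul, ← add_div, add_comm]
    gcongr
    rw [div_le_iff₀ (hpos _ k.succ_pos hm)]
    exact hrec k hm
  have := sum_le_sum hedge
  rw [← mul_sum, sum_add_distrib, hshift, ← sum_add_distrib] at this
  linarith [sum_le_sum hvertex, mul_sum (range N) (fun m => a m ^ 2) (2 * c)]

lemma natCast_mul_pi_div_le_pi {m N : ℕ} (h : m ≤ N) : (m : ℝ) * (π / N) ≤ π := by
  rcases Nat.eq_zero_or_pos N with rfl | hN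
  · simp [pi_nonneg]
  rw [mul_div_assoc', div_le_iff₀ (by positivity), mul_comm]
  gcongr

lemma sum_range_mul_succ_le_cos {N : ℕ} (a : ℕ → ℝ) (ha0 : a 0 = 0) (haN : a N = 0) :
    ∑ m ∈ range N, a m * a (m + 1) ≤ cos (π / N) * ∑ m ∈ range N, a m ^ 2 := by
  refine sum_range_mul_succ_le_of_supersolution (fun m => sin (m * (π / N))) a
    (fun m hm => sin_nonneg_of_nonneg_of_le_pi (by positivity) (natCast_mul_pi_div_le_pi hm))
    (fun m hm hmN => sin_pos_of_pos_of_lt_pi ?_ ?_) (fun m _ => ?_) ha0 haN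
  · have : (0 : ℝ) < N := by exact_mod_cast hm.trans hmN
    exact mul_pos (by exact_mod_cast hm) (div_pos pi_pos this)
  · have hN : (0 : ℝ) < N := by exact_mod_cast hm.trans hmN
    have : (m : ℝ) < N := by exact_mod_cast hmN
    calc (m : ℝ) * (π / N) < N * (π / N) := by gcongr
      _ = π := by field_simp
  · have := two_mul_sin_mul_cos ((m + 1 : ℕ) * (π / N)) (π / N)
    push_cast at this ⊢
    rw [show (m + 1 : ℝ) * (π / N) - π / N = m * (π / N) by ring,
      show (m + 1 : ℝ) * (π / N) + π / N = (m + 2) * (π / N) by ring] at this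
    linarith

lemma sq_norm_mul_sin_mul_sum_norm_sq_le {N : ℕ} (b c : ℂ) (z : ℕ → ℂ) (h0 : z 0 = 0)
    (hN : z N = 0) :
    (‖b‖ * sin (π / N)) ^ 2 * ∑ m ∈ range N, ‖z m‖ ^ 2 ≤
      ∑ m ∈ range N, ‖c * z (m + 1) + b * z m‖ ^ 2 := by
  have hpoint : ∀ m ∈ range N, (‖c‖ * ‖z (m + 1)‖ - ‖b‖ * ‖z m‖) ^ 2 ≤
      ‖c * z (m + 1) + b * z m‖ ^ 2 := by
    intro m _
    have := abs_norm_sub_norm_le (c * z (m + 1)) (-(b * z m))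
    rw [sub_neg_eq_add, norm_neg, norm_mul, norm_mul] at this
    exact sq_le_sq' (abs_le.1 this).1 (abs_le.1 this).2
  have hshift : ∑ m ∈ range N, ‖z (m + 1)‖ ^ 2 = ∑ m ∈ range N, ‖z m‖ ^ 2 :=
    sum_range_succ_eq_of_eq (fun m => ‖z m‖ ^ 2) (by simp [h0, hN])
  have hexpand : ∑ m ∈ range N, (‖c‖ * ‖z (m + 1)‖ - ‖b‖ * ‖z m‖) ^ 2 =
      (‖c‖ ^ 2 + ‖b‖ ^ 2) * ∑ m ∈ range N, ‖z m‖ ^ 2 -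
        2 * (‖c‖ * ‖b‖) * ∑ m ∈ range N, ‖z m‖ * ‖z (m + 1)‖ := by
    have hterm : ∀ m, (‖c‖ * ‖z (m + 1)‖ - ‖b‖ * ‖z m‖) ^ 2 = ‖c‖ ^ 2 * ‖z (m + 1)‖ ^ 2 +
        ‖b‖ ^ 2 * ‖z m‖ ^ 2 - 2 * (‖c‖ * ‖b‖) * (‖z m‖ * ‖z (m + 1)‖) := fun m => by ring
    simp only [hterm, sum_sub_distrib, sum_add_distrib, ← mul_sum, hshift]
    ring
  have hpath := sum_range_mul_succ_le_cos (N := N) (fun m => ‖z m‖) (by simp [h0]) (by simp [hN])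
  have hcb : 0 ≤ ‖c‖ * ‖b‖ := by positivity
  have hS : 0 ≤ ∑ m ∈ range N, ‖z m‖ ^ 2 := by positivity
  calc (‖b‖ * sin (π / N)) ^ 2 * ∑ m ∈ range N, ‖z m‖ ^ 2
      ≤ (‖c‖ ^ 2 + ‖b‖ ^ 2 - 2 * (‖c‖ * ‖b‖) * cos (π / N)) * ∑ m ∈ range N, ‖z m‖ ^ 2 := by
        gcongr
        nlinarith [sq_nonneg (‖c‖ - ‖b‖ * cos (π / N)), sin_sq_add_cos_sq (π / N)]
    _ ≤ ∑ m ∈ range N, (‖c‖ * ‖z (m + 1)‖ - ‖b‖ * ‖z m‖) ^ 2 := by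
        rw [hexpand]
        nlinarith [mul_le_mul_of_nonneg_left hpath hcb]
    _ ≤ _ := sum_le_sum hpoint

lemma sin_pi_div_pos {N : ℕ} (hN : 2 ≤ N) : 0 < sin (π / N) := by
  have : (2 : ℝ) ≤ N := by exact_mod_cast hN
  refine sin_pos_of_pos_of_lt_pi (by positivity) ?_
  rw [div_lt_iff₀ (by positivity)]
  nlinarith [pi_pos]

lemma sum_range_cos_sq_eq_sum_range_sin_sq {N : ℕ} (hN : 2 ≤ N) :
    ∑ m ∈ range N, cos (m * (π / N)) ^ 2 = ∑ m ∈ range N, sin (m * (π / N)) ^ 2 := by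
  have hN0 : (N : ℝ) ≠ 0 := by positivity
  have hsum := sin_mul_sum_cos N (2 * (π / N)) 0
  rw [show (N : ℝ) * (2 * (π / N)) / 2 = π by field_simp, sin_pi, zero_mul,
    show 2 * (π / N) / 2 = π / N by ring] at hsum
  rw [← sub_eq_zero, ← sum_sub_distrib,
    ← (mul_eq_zero.1 hsum).resolve_left (sin_pi_div_pos hN).ne']
  refine sum_congr rfl fun m _ => ?_
  rw [← cos_two_mul']
  ring_nf

def rhoLastUnit (n : ℕ) (ρ : ℝ) : Matrix (Fin n) (Fin 1) ℂ :=
  Matrix.of fun i (_ : Fin 1) => if (i : ℕ) = n - 1 then (ρ : ℂ) else 0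

section Padding

variable {n : ℕ}

def pad (v : EuclideanSpace ℂ (Fin n)) : ℕ → ℂ
  | 0 => 0
  | m + 1 => if h : m < n then v ⟨m, h⟩ else 0

@[simp] lemma pad_zero (v : EuclideanSpace ℂ (Fin n)) : pad v 0 = 0 := rfl

lemma pad_of_lt (v : EuclideanSpace ℂ (Fin n)) {m : ℕ} (hm : n < m) : pad v m = 0 := by
  obtain ⟨k, rfl⟩ : ∃ k, m = k + 1 := ⟨m - 1, by omega⟩
  simp [pad, show ¬ k < n by omega]

lemma sum_ite_mul_eq_mul_pad_succ (v : EuclideanSpace ℂ (Fin n)) (a : ℂ) (m : ℕ) :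
    ∑ i : Fin n, (if (i : ℕ) = m then a else 0) * v i = a * pad v (m + 1) := by
  by_cases hm : m < n
  · simp [pad, hm, ← Fin.ext_iff (b := ⟨m, hm⟩)]
  · rw [pad_of_lt v (by omega), mul_zero]
    exact sum_eq_zero fun i _ => by rw [if_neg (by omega), zero_mul]

lemma sum_ite_mul_eq_mul_pad (v : EuclideanSpace ℂ (Fin n)) (a : ℂ) (m : ℕ) :
    ∑ i : Fin n, (if m = (i : ℕ) + 1 then a else 0) * v i = a * pad v m := by
  cases m with
  | zero => simp
  | succ m =>
    simp only [Nat.add_right_cancel_iff, @eq_comm ℕ m]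
    exact sum_ite_mul_eq_mul_pad_succ v a m

@[simp] lemma pad_succ (v : EuclideanSpace ℂ (Fin n)) (i : Fin n) : pad v (i + 1) = v i := by
  simp [pad]

lemma sum_range_norm_sq_pad (v : EuclideanSpace ℂ (Fin n)) :
    ∑ m ∈ range (n + 1), ‖pad v m‖ ^ 2 = ‖v‖ ^ 2 := by
  rw [EuclideanSpace.norm_sq_eq, sum_range_succ', pad_zero, norm_zero, zero_pow two_ne_zero,
    add_zero, ← Fin.sum_univ_eq_sum_range (fun m => ‖pad v (m + 1)‖ ^ 2)]
  simp

end Padding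

section Model

variable {n : ℕ} (ρ : ℝ) (s : ℂ)

lemma fromCols_rhoJordan_apply_inl (i j : Fin n) :
    fromCols (rhoJordan n ρ - s • 1) (rhoLastUnit n ρ) i (Sum.inl j) =
      (if (i : ℕ) = j then (ρ : ℂ) - s else 0) + (if (j : ℕ) = i + 1 then (ρ : ℂ) else 0) := by
  simp only [fromCols_apply_inl, Matrix.sub_apply, rhoJordan, of_apply, Matrix.smul_apply,
    one_apply, Fin.ext_iff, smul_eq_mul]
  split_ifs <;> first | omega | ring

lemma rhoLastUnit_apply (i : Fin n) (b : Fin 1) :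
    rhoLastUnit n ρ i b = if n = (i : ℕ) + 1 then (ρ : ℂ) else 0 := by
  have := i.isLt
  simp only [rhoLastUnit, of_apply]
  split_ifs <;> first | rfl | omega

lemma conjTranspose_fromCols_rhoJordan_mulVec_inl (v : EuclideanSpace ℂ (Fin n)) (j : Fin n) :
    ((fromCols (rhoJordan n ρ - s • 1) (rhoLastUnit n ρ))ᴴ *ᵥ v) (Sum.inl j) =
      star ((ρ : ℂ) - s) * pad v (j + 1) + ρ * pad v j := by
  simp only [mulVec, dotProduct, conjTranspose_apply, fromCols_rhoJordan_apply_inl, star_add,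
    apply_ite star, star_zero, Complex.star_def, Complex.conj_ofReal, add_mul, sum_add_distrib,
    sum_ite_mul_eq_mul_pad_succ, sum_ite_mul_eq_mul_pad]

lemma conjTranspose_fromCols_rhoJordan_mulVec_inr (v : EuclideanSpace ℂ (Fin n)) (b : Fin 1) :
    ((fromCols (rhoJordan n ρ - s • 1) (rhoLastUnit n ρ))ᴴ *ᵥ v) (Sum.inr b) = ρ * pad v n := by
  simp only [mulVec, dotProduct, conjTranspose_apply, fromCols_apply_inr, rhoLastUnit_apply,
    apply_ite star, star_zero, Complex.star_def, Complex.conj_ofReal, sum_ite_mul_eq_mul_pad]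

lemma norm_sq_toEuclideanLin_conjTranspose_fromCols_rhoJordan (v : EuclideanSpace ℂ (Fin n)) :
    ‖toEuclideanLin (fromCols (rhoJordan n ρ - s • 1) (rhoLastUnit n ρ))ᴴ v‖ ^ 2 =
      ∑ m ∈ range (n + 1), ‖star ((ρ : ℂ) - s) * pad v (m + 1) + ρ * pad v m‖ ^ 2 := by
  rw [EuclideanSpace.norm_sq_eq, Fintype.sum_sum_type, sum_range_succ,
    ← Fin.sum_univ_eq_sum_range (fun m => ‖star ((ρ : ℂ) - s) * pad v (m + 1) + ρ * pad v m‖ ^ 2),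
    pad_of_lt v n.lt_succ_self]
  simp [toLpLin_apply, conjTranspose_fromCols_rhoJordan_mulVec_inl,
    conjTranspose_fromCols_rhoJordan_mulVec_inr]

end Model

lemma mul_sin_le_sigmaMin {n : ℕ} (hn : 0 < n) (ρ : ℝ) (s : ℂ) :
    |ρ| * sin (π / (n + 1)) ≤ sigmaMin (fromCols (rhoJordan n ρ - s • 1) (rhoLastUnit n ρ)) := by
  refine le_sigmaMin _ hn fun v => le_of_pow_le_pow_left₀ two_ne_zero (norm_nonneg _) ?_
  have key := sq_norm_mul_sin_mul_sum_norm_sq_le (N := n + 1) (ρ : ℂ) (star ((ρ : ℂ) - s))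
    (pad v) (pad_zero v) (pad_of_lt v n.lt_succ_self)
  rwa [sum_range_norm_sq_pad, ← norm_sq_toEuclideanLin_conjTranspose_fromCols_rhoJordan,
    Complex.norm_real, norm_eq_abs, ← mul_pow, Nat.cast_succ] at key

section SineMode

variable {n : ℕ}

variable (n) in
noncomputable def sineMode : EuclideanSpace ℂ (Fin n) :=
  WithLp.toLp 2 fun i => (sin (((i : ℕ) + 1 : ℕ) * (π / (n + 1))) : ℂ)

lemma pad_sineMode {m : ℕ} (hm : m ≤ n + 1) :
    pad (sineMode n) m = (sin (m * (π / (n + 1))) : ℂ) := by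
  rcases m with _ | m
  · simp
  rcases (Nat.lt_succ_iff.1 hm).lt_or_eq with hmn | rfl
  · simp [pad, hmn, sineMode]
  · rw [pad_of_lt _ (Nat.lt_succ_self _), Nat.cast_succ, mul_div_cancel₀ _ (by positivity),
      sin_pi, Complex.ofReal_zero]

lemma norm_sineMode_sq : ‖sineMode n‖ ^ 2 = ∑ m ∈ range (n + 1), sin (m * (π / (n + 1))) ^ 2 := by
  rw [← sum_range_norm_sq_pad]
  refine sum_congr rfl fun m hm => ?_
  rw [pad_sineMode (mem_range.1 hm).le, Complex.norm_real, norm_eq_abs, sq_abs]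

lemma sineMode_ne_zero (hn : 0 < n) : sineMode n ≠ 0 := by
  intro h
  have h1 := pad_sineMode (n := n) (m := 1) (by omega)
  rw [h] at h1
  have := sin_pi_div_pos (N := n + 1) (by omega)
  push_cast at this
  simp [pad, hn, -Complex.ofReal_sin] at h1
  exact this.ne' (by exact_mod_cast h1.symm)

/-- The shift makes `conj (ρ - s) = -ρ cos α`, the equality case of the lower bound. -/
lemma norm_toEuclideanLin_conjTranspose_sineMode (hn : 0 < n) (ρ : ℝ) :
    ‖toEuclideanLin (fromCols (rhoJordan n ρ - ((ρ * (1 + cos (π / (n + 1))) : ℝ) : ℂ) • 1)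
      (rhoLastUnit n ρ))ᴴ (sineMode n)‖ = |ρ| * sin (π / (n + 1)) * ‖sineMode n‖ := by
  set α := π / (n + 1)
  have hαπ : (n + 1 : ℝ) * α = π := mul_div_cancel₀ _ (by positivity)
  have hterm : ∀ m ∈ range (n + 1), ‖star ((ρ : ℂ) - ((ρ * (1 + cos α) : ℝ) : ℂ)) *
      pad (sineMode n) (m + 1) + ρ * pad (sineMode n) m‖ ^ 2 =
        (|ρ| * sin α) ^ 2 * cos (((m + 1 : ℕ) : ℝ) * α) ^ 2 := by
    intro m hm
    rw [mem_range] at hm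
    have hsin : sin (m * α) = sin ((m + 1 : ℕ) * α) * cos α - cos ((m + 1 : ℕ) * α) * sin α := by
      rw [← sin_sub]; push_cast; ring_nf
    rw [pad_sineMode (by omega), pad_sineMode (by omega), ← Complex.ofReal_sub, Complex.star_def,
      Complex.conj_ofReal, ← Complex.ofReal_mul, ← Complex.ofReal_mul, ← Complex.ofReal_add,
      Complex.norm_real, norm_eq_abs, sq_abs, hsin, mul_pow, sq_abs]
    ring
  have hcos : ∑ m ∈ range (n + 1), cos (((m + 1 : ℕ) : ℝ) * α) ^ 2 =
      ∑ m ∈ range (n + 1), cos (m * α) ^ 2 :=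
    sum_range_succ_eq_of_eq (fun k => cos (k * α) ^ 2) (by simp [hαπ])
  have htrig := sum_range_cos_sq_eq_sum_range_sin_sq (N := n + 1) (by omega)
  rw [Nat.cast_succ] at htrig
  have hsinα := sin_pi_div_pos (N := n + 1) (by omega)
  rw [Nat.cast_succ] at hsinα
  refine (pow_left_inj₀ (norm_nonneg _) (by positivity) two_ne_zero).1 ?_
  rw [norm_sq_toEuclideanLin_conjTranspose_fromCols_rhoJordan, sum_congr rfl hterm, ← mul_sum,
    hcos, htrig, mul_pow _ ‖_‖, norm_sineMode_sq]

end SineMode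

lemma sigmaMin_le_mul_sin {n : ℕ} (hn : 0 < n) (ρ : ℝ) :
    sigmaMin (fromCols (rhoJordan n ρ - ((ρ * (1 + cos (π / (n + 1))) : ℝ) : ℂ) • 1)
      (rhoLastUnit n ρ)) ≤ |ρ| * sin (π / (n + 1)) :=
  le_of_mul_le_mul_right ((sigmaMin_mul_norm_le _ _).trans
    (norm_toEuclideanLin_conjTranspose_sineMode hn ρ).le) (norm_pos_iff.2 (sineMode_ne_zero hn))

theorem distUnc_rhoJordan_rhoLastUnit {n : ℕ} (hn : 0 < n) (ρ : ℝ) :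
    distUnc (rhoJordan n ρ) (rhoLastUnit n ρ) = |ρ| * sin (π / (n + 1)) :=
  le_antisymm ((distUnc_le_sigmaMin _ _ _).trans (sigmaMin_le_mul_sin hn ρ))
    (le_ciInf (mul_sin_le_sigmaMin hn ρ))

theorem integrator_distance_linear_degradation_general {n : ℕ} (hn : 1 ≤ n) (ρ : ℝ)
    (hρ0 : 0 < ρ) :
    2 * ρ / (n + 1) ≤ distUnc (rhoJordan n ρ)
        (Matrix.of fun i (_ : Fin 1) => if (i : ℕ) = n - 1 then (ρ : ℂ) else 0) ∧
    distUnc (rhoJordan n ρ)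
        (Matrix.of fun i (_ : Fin 1) => if (i : ℕ) = n - 1 then (ρ : ℂ) else 0) ≤
      π * ρ / (n + 1) := by
  change 2 * ρ / (n + 1) ≤ distUnc (rhoJordan n ρ) (rhoLastUnit n ρ) ∧
    distUnc (rhoJordan n ρ) (rhoLastUnit n ρ) ≤ π * ρ / (n + 1)
  rw [distUnc_rhoJordan_rhoLastUnit hn, abs_of_pos hρ0]
  have hα0 : 0 ≤ π / (n + 1) := by positivity
  have hα : π / (n + 1) ≤ π / 2 := by
    gcongr
    norm_cast
    omega
  constructor
  · calc 2 * ρ / (n + 1) = ρ * (2 / π * (π / (n + 1))) := by field_simp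
      _ ≤ ρ * sin (π / (n + 1)) := by gcongr; exact mul_le_sin hα0 hα
  · calc ρ * sin (π / (n + 1)) ≤ ρ * (π / (n + 1)) := by gcongr; exact sin_le hα0
      _ = π * ρ / (n + 1) := by ring

theorem integrator_distance_linear_degradation {n : ℕ} (hn : 1 ≤ n) (ρ : ℝ)
    (hρ0 : 0 < ρ) (hρ1 : ρ < 1) :
    2 * ρ / (n + 1) ≤ distUnc (rhoJordan n ρ)
        (Matrix.of fun i (_ : Fin 1) => if (i : ℕ) = n - 1 then (ρ : ℂ) else 0) ∧
    distUnc (rhoJordan n ρ)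
        (Matrix.of fun i (_ : Fin 1) => if (i : ℕ) = n - 1 then (ρ : ℂ) else 0) ≤
      π * ρ / (n + 1) :=
  integrator_distance_linear_degradation_general hn ρ hρ0
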